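/- Let (A,(p_l)) be a non-unital Fréchet algebra and let n ∈ ℕ. If the unitization A# is n-ideally amenable, then A is n-ideally amenable. -/

import Mathlib

noncomputable section

open Filter Topology

/-- A topological `ℂ`-module `X` equipped with left and right actions of `A`,
each acting by continuous linear maps on `X`.  This is the data underlying a
locally convex `A`-bimodule. -/
structure BiMod (A : Type) : Type 1 where
  X : Type
  [ag : AddCommGroup X]
  [md : Module ℂ X]
  [ts : TopologicalSpace X]
  l : A → X →L[ℂ] X
  r : A → X →L[ℂ] X

attribute [instance] BiMod.ag BiMod.md BiMod.ts

namespace BiMod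

variable {A : Type}

/-- The strong dual of a bimodule, with the canonical dual actions
`⟨a·f, x⟩ = ⟨f, x·a⟩` and `⟨f·a, x⟩ = ⟨f, a·x⟩`.  The dual carries the strong
topology (uniform convergence on von Neumann bounded sets), which is the default
topology on `X →L[ℂ] ℂ` in Mathlib. -/
def dual (M : BiMod A) : BiMod A where
  X := M.X →L[ℂ] ℂ
  l a := ContinuousLinearMap.precomp ℂ (M.r a)
  r a := ContinuousLinearMap.precomp ℂ (M.l a)

/-- The `n`-th iterated strong dual of a bimodule (`iterDual M 0 = M`). -/
def iterDual (M : BiMod A) : ℕ → BiMod A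
  | 0 => M
  | n + 1 => (M.iterDual n).dual

instance dualCSM (M : BiMod A) : ContinuousSMul ℂ (M.dual).X :=
  inferInstanceAs (ContinuousSMul ℂ (M.X →L[ℂ] ℂ))

/-- Evaluation (canonical) embedding of a bimodule into its double dual. -/
def evalEmbed (M : BiMod A) [ContinuousSMul ℂ M.X] (x : M.X) : M.dual.dual.X :=
  show (M.X →L[ℂ] ℂ) →L[ℂ] ℂ from
    ⟨⟨⟨fun f => f x, fun _ _ => rfl⟩, fun _ _ => rfl⟩, continuous_eval_const x⟩

/-- `ContinuousSMul` holds at every level of the iterated dual. -/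
def iterCSM (M : BiMod A) (h : ContinuousSMul ℂ M.X) :
    ∀ n, ContinuousSMul ℂ (M.iterDual n).X
  | 0 => h
  | n + 1 => inferInstanceAs (ContinuousSMul ℂ ((M.iterDual n).X →L[ℂ] ℂ))

/-- The canonical (iterated evaluation) embedding `M → M^(2n)`. -/
def iterEmbed (M : BiMod A) (h : ContinuousSMul ℂ M.X) :
    ∀ n : ℕ, M.X → (M.iterDual (2 * n)).X
  | 0, x => x
  | n + 1, x =>
    haveI := M.iterCSM h (2 * n)
    (M.iterDual (2 * n)).evalEmbed (M.iterEmbed h n x)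

/-- The pairing between the `(k+1)`-st dual and the `k`-th dual. -/
def pairApply (M : BiMod A) (k : ℕ) (F : (M.iterDual (k + 1)).X)
    (x : (M.iterDual k).X) : ℂ := (show (M.iterDual k).X →L[ℂ] ℂ from F) x

end BiMod

section Defs

variable (A : Type) [NonUnitalRing A] [Module ℂ A] [SMulCommClass ℂ A A] [IsScalarTower ℂ A A]
  [TopologicalSpace A] [IsTopologicalAddGroup A] [ContinuousSMul ℂ A] [ContinuousMul A]

/-- A continuous derivation from `A` into a bimodule. -/
def IsContDerivation (M : BiMod A) (D : A →L[ℂ] M.X) : Prop :=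
  ∀ a b : A, D (a * b) = M.l a (D b) + M.r b (D a)

/-- An inner derivation : `D a = a·x - x·a` for some `x`. -/
def IsInnerDerivation (M : BiMod A) (D : A →L[ℂ] M.X) : Prop :=
  ∃ x : M.X, ∀ a : A, D a = M.l a x - M.r a x

/-- `A` as a bimodule over itself, via left/right multiplication. -/
def selfBiMod : BiMod A where
  X := A
  l a := ⟨LinearMap.mulLeft ℂ a, continuous_mul_left a⟩
  r a := ⟨LinearMap.mulRight ℂ a, continuous_mul_right a⟩

/-- `A` is `n`-weakly amenable if every continuous derivation from `A` into the
`n`-th iterated strong dual `A^(n)` (with the canonical module actions) is inner. -/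
def NWeaklyAmenable (n : ℕ) : Prop :=
  ∀ D : A →L[ℂ] ((selfBiMod A).iterDual n).X,
    IsContDerivation A ((selfBiMod A).iterDual n) D →
      IsInnerDerivation A ((selfBiMod A).iterDual n) D

/-- A closed two-sided ideal `I` of `A` (a closed `ℂ`-subalgebra which absorbs
multiplication on both sides) as an `A`-bimodule. -/
def idealBiMod (I : NonUnitalSubalgebra ℂ A)
    (hl : ∀ a : A, ∀ x ∈ I, a * x ∈ I) (hr : ∀ a : A, ∀ x ∈ I, x * a ∈ I) : BiMod A where
  X := ↥I
  l a := ⟨{ toFun := fun x => (⟨a * (x : A), hl a x x.2⟩ : ↥I)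
            map_add' := fun x y => by ext; simp [mul_add]
            map_smul' := fun c x => by ext; simp [mul_smul_comm] },
          (Continuous.subtype_mk ((continuous_mul_left a).comp continuous_subtype_val) _)⟩
  r a := ⟨{ toFun := fun x => (⟨(x : A) * a, hr a x x.2⟩ : ↥I)
            map_add' := fun x y => by ext; simp [add_mul]
            map_smul' := fun c x => by ext; simp [smul_mul_assoc] },
          (Continuous.subtype_mk ((continuous_mul_right a).comp continuous_subtype_val) _)⟩

/-- `A` is `n`-ideally amenable if for every closed two-sided ideal `I` of `A`,
every continuous derivation from `A` into `I^(n)` is inner. -/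
def NIdeallyAmenable (n : ℕ) : Prop :=
  ∀ (I : NonUnitalSubalgebra ℂ A), IsClosed (I : Set A) →
    ∀ (hl : ∀ a : A, ∀ x ∈ I, a * x ∈ I) (hr : ∀ a : A, ∀ x ∈ I, x * a ∈ I),
      ∀ D : A →L[ℂ] ((idealBiMod A I hl hr).iterDual n).X,
        IsContDerivation A ((idealBiMod A I hl hr).iterDual n) D →
          IsInnerDerivation A ((idealBiMod A I hl hr).iterDual n) D

/-- The topology of `A` is generated by an increasing sequence of submultiplicative
seminorms.  Together with completeness and Hausdorffness this says that `A` is a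
Fréchet algebra. -/
def FrechetSeminorms : Prop :=
  ∃ p : SeminormFamily ℂ A ℕ, WithSeminorms p ∧ (∀ n, p n ≤ p (n + 1)) ∧
    ∀ (n : ℕ) (x y : A), p n (x * y) ≤ p n x * p n y

/-- `A` has an identity element. -/
def HasIdentity : Prop := ∃ e : A, ∀ a : A, e * a = a ∧ a * e = a

end Defs

section Montel

variable (E : Type) [AddCommGroup E] [Module ℂ E] [TopologicalSpace E]

/-- A Montel space: a barrelled locally convex Hausdorff space in which every closed
(von Neumann) bounded subset is compact. -/
def IsMontelSpace : Prop :=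
  LocallyConvexSpace ℝ E ∧ T2Space E ∧ BarrelledSpace ℂ E ∧
    ∀ s : Set E, IsClosed s → Bornology.IsVonNBounded ℂ s → IsCompact s

end Montel

section More

variable (A : Type) [NonUnitalRing A] [Module ℂ A] [SMulCommClass ℂ A A] [IsScalarTower ℂ A A]
  [TopologicalSpace A] [IsTopologicalAddGroup A] [ContinuousSMul ℂ A] [ContinuousMul A]

/-- A bounded approximate identity: a bounded net `(e_i)` with `e_i * a → a` and
`a * e_i → a` for every `a`. -/
def HasBoundedApproxIdentity : Prop :=
  ∃ (ι : Type) (_ : Preorder ι) (_ : IsDirected ι (· ≤ ·)) (_ : Nonempty ι) (e : ι → A),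
    Bornology.IsVonNBounded ℂ (Set.range e) ∧
      ∀ a : A, Tendsto (fun i => e i * a) atTop (𝓝 a) ∧
        Tendsto (fun i => a * e i) atTop (𝓝 a)

/-- `A` is essential: the linear span of products is dense. -/
def IsEssential : Prop :=
  Dense ((Submodule.span ℂ {x : A | ∃ a b : A, x = a * b} : Submodule ℂ A) : Set A)

/-- `A` is self-induced: it is essential and every balanced bilinear functional
`φ` (i.e. `φ (a*c) b = φ a (c*b)`) is of the form `φ a b = f (a*b)` for some
continuous linear functional `f`. -/
def SelfInduced : Prop :=
  IsEssential A ∧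
    ∀ φ : A →ₗ[ℂ] A →ₗ[ℂ] ℂ, (∀ a b c : A, φ (a * c) b = φ a (c * b)) →
      ∃ f : A →L[ℂ] ℂ, ∀ a b : A, φ a b = f (a * b)

/-- The data of `M : BiMod A` constitutes a genuine locally convex `A`-bimodule:
the actions satisfy the bimodule laws, are `ℂ`-bilinear, jointly continuous, and
`M.X` is locally convex. -/
structure IsLCBimod (M : BiMod A) : Prop where
  lc : LocallyConvexSpace ℝ M.X
  l_mul : ∀ (a b : A) (x : M.X), M.l (a * b) x = M.l a (M.l b x)
  r_mul : ∀ (a b : A) (x : M.X), M.r (a * b) x = M.r b (M.r a x)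
  l_add : ∀ (a b : A) (x : M.X), M.l (a + b) x = M.l a x + M.l b x
  r_add : ∀ (a b : A) (x : M.X), M.r (a + b) x = M.r a x + M.r b x
  l_smul : ∀ (c : ℂ) (a : A) (x : M.X), M.l (c • a) x = c • M.l a x
  r_smul : ∀ (c : ℂ) (a : A) (x : M.X), M.r (c • a) x = c • M.r a x
  lr_comm : ∀ (a b : A) (x : M.X), M.l a (M.r b x) = M.r b (M.l a x)
  cont_l : Continuous fun q : A × M.X => M.l q.1 q.2
  cont_r : Continuous fun q : A × M.X => M.r q.1 q.2

/-- `A` is amenable: for every locally convex `A`-bimodule `X`, every continuous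
derivation from `A` into the strong dual `X*` (with the canonical dual actions)
is inner. -/
def Amenable : Prop :=
  ∀ M : BiMod A, IsLCBimod A M →
    ∀ D : A →L[ℂ] M.dual.X, IsContDerivation A M.dual D → IsInnerDerivation A M.dual D

end More

section UnitizationInstances

variable (A : Type) [NonUnitalRing A] [Module ℂ A] [SMulCommClass ℂ A A] [IsScalarTower ℂ A A]
  [TopologicalSpace A] [IsTopologicalAddGroup A] [ContinuousSMul ℂ A] [ContinuousMul A]

/-- The unitization `A# = ℂ ⊕ A` carries the product topology, which is the topology
generated by the seminorms `q_l (a, λ) = p_l a + |λ|`. -/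
instance : TopologicalSpace (Unitization ℂ A) :=
  TopologicalSpace.induced Unitization.toProd (inferInstanceAs (TopologicalSpace (ℂ × A)))

instance : IsTopologicalAddGroup (Unitization ℂ A) where
  continuous_add := continuous_induced_rng.2
    ((continuous_induced_dom.comp continuous_fst).add (continuous_induced_dom.comp continuous_snd))
  continuous_neg := continuous_induced_rng.2 continuous_induced_dom.neg

instance : ContinuousSMul ℂ (Unitization ℂ A) where
  continuous_smul := continuous_induced_rng.2
    (continuous_fst.smul (continuous_induced_dom.comp continuous_snd))

instance : ContinuousMul (Unitization ℂ A) where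
  continuous_mul := by
    apply continuous_induced_rng.2
    have hc : Continuous (Unitization.toProd : Unitization ℂ A → ℂ × A) := continuous_induced_dom
    exact (show Continuous fun p : (ℂ × A) × ℂ × A =>
      ((p.1.1 * p.2.1, p.1.1 • p.2.2 + p.2.1 • p.1.2 + p.1.2 * p.2.2) : ℂ × A) by
      fun_prop).comp ((hc.comp continuous_fst).prodMk (hc.comp continuous_snd))

end UnitizationInstances

/-! A derivation `D : A → I^(n)` extends to `A#` by `D (λ, a) := D a`, with values in the
`n`-th dual of the copy `0 ⊕ I` of `I` in `A#`; this dual is `I^(n)` with `λ ∈ ℂ` acting by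
scalars, so the Leibniz rule survives. Innerness of the extension on `A#` restricts to
innerness of `D` on `A`. -/

namespace BiMod

variable {A : Type}

structure UnitizationEquiv (M : BiMod A) (N : BiMod (Unitization ℂ A)) where
  toEquiv : M.X ≃L[ℂ] N.X
  map_l : ∀ (z : Unitization ℂ A) (x : M.X),
    N.l z (toEquiv x) = toEquiv (z.fst • x + M.l z.snd x)
  map_r : ∀ (z : Unitization ℂ A) (x : M.X),
    N.r z (toEquiv x) = toEquiv (z.fst • x + M.r z.snd x)

namespace UnitizationEquiv

variable {M : BiMod A} {N : BiMod (Unitization ℂ A)}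

theorem l_eq (c : UnitizationEquiv M N) (z : Unitization ℂ A) (y : N.X) :
    N.l z y = c.toEquiv (z.fst • c.toEquiv.symm y + M.l z.snd (c.toEquiv.symm y)) := by
  rw [← c.map_l, c.toEquiv.apply_symm_apply]

theorem r_eq (c : UnitizationEquiv M N) (z : Unitization ℂ A) (y : N.X) :
    N.r z y = c.toEquiv (z.fst • c.toEquiv.symm y + M.r z.snd (c.toEquiv.symm y)) := by
  rw [← c.map_r, c.toEquiv.apply_symm_apply]

def dual (c : UnitizationEquiv M N) : UnitizationEquiv M.dual N.dual where
  toEquiv := c.toEquiv.arrowCongr (ContinuousLinearEquiv.refl ℂ ℂ)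
  map_l z (f : M.X →L[ℂ] ℂ) := ContinuousLinearMap.ext fun y => by
    change f (c.toEquiv.symm (N.r z y)) = _
    rw [c.r_eq, c.toEquiv.symm_apply_apply, map_add, map_smul]
    rfl
  map_r z (f : M.X →L[ℂ] ℂ) := ContinuousLinearMap.ext fun y => by
    change f (c.toEquiv.symm (N.l z y)) = _
    rw [c.l_eq, c.toEquiv.symm_apply_apply, map_add, map_smul]
    rfl

def iterDual (c : UnitizationEquiv M N) :
    ∀ n : ℕ, UnitizationEquiv (M.iterDual n) (N.iterDual n)
  | 0 => c
  | n + 1 => (c.iterDual n).dual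

end UnitizationEquiv

end BiMod

section Continuity

variable {A : Type} [TopologicalSpace A]

theorem continuous_unitization_fst : Continuous fun z : Unitization ℂ A => z.fst :=
  continuous_fst.comp continuous_induced_dom

theorem continuous_unitization_snd : Continuous fun z : Unitization ℂ A => z.snd :=
  continuous_snd.comp continuous_induced_dom

theorem continuous_unitization_inr : Continuous fun a : A => (a : Unitization ℂ A) :=
  continuous_induced_rng.2 (continuous_const.prodMk continuous_id)

end Continuity

section Derivation

variable {A : Type} [NonUnitalRing A] [Module ℂ A] [TopologicalSpace A]

variable (A) in
def Unitization.sndCLM : Unitization ℂ A →L[ℂ] A :=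
  ⟨Unitization.sndHom ℂ ℂ A, continuous_unitization_snd⟩

namespace BiMod.UnitizationEquiv

variable {M : BiMod A} {N : BiMod (Unitization ℂ A)}

def extendDerivation (c : UnitizationEquiv M N) (D : A →L[ℂ] M.X) :
    Unitization ℂ A →L[ℂ] N.X :=
  (c.toEquiv : M.X →L[ℂ] N.X).comp (D.comp (Unitization.sndCLM A))

theorem extendDerivation_apply (c : UnitizationEquiv M N) (D : A →L[ℂ] M.X)
    (z : Unitization ℂ A) : c.extendDerivation D z = c.toEquiv (D z.snd) :=
  rfl

variable [SMulCommClass ℂ A A] [IsScalarTower ℂ A A]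

theorem isContDerivation_extendDerivation (c : UnitizationEquiv M N) {D : A →L[ℂ] M.X}
    (hD : IsContDerivation A M D) :
    IsContDerivation (Unitization ℂ A) N (c.extendDerivation D) := by
  intro p q
  simp only [extendDerivation_apply, Unitization.snd_mul, map_add, map_smul]
  rw [hD, c.map_l, c.map_r]
  simp only [map_add, map_smul]
  abel

theorem isInnerDerivation_of_extendDerivation (c : UnitizationEquiv M N) {D : A →L[ℂ] M.X}
    (hD : IsInnerDerivation (Unitization ℂ A) N (c.extendDerivation D)) :
    IsInnerDerivation A M D := by
  obtain ⟨x, hx⟩ := hD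
  refine ⟨c.toEquiv.symm x, fun a => c.toEquiv.injective ?_⟩
  have hxa := hx a
  rwa [extendDerivation_apply, Unitization.snd_inr, c.l_eq, c.r_eq, Unitization.fst_inr,
    Unitization.snd_inr, zero_smul, zero_add, zero_add, ← map_sub] at hxa

end BiMod.UnitizationEquiv

end Derivation

section Ideal

variable {A : Type} [NonUnitalRing A] [Module ℂ A]

def NonUnitalSubalgebra.toUnitization (I : NonUnitalSubalgebra ℂ A) :
    NonUnitalSubalgebra ℂ (Unitization ℂ A) where
  carrier := {z | z.fst = 0 ∧ z.snd ∈ I}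
  add_mem' {x y} hx hy := ⟨by rw [Unitization.fst_add, hx.1, hy.1, add_zero],
    by rw [Unitization.snd_add]; exact add_mem hx.2 hy.2⟩
  zero_mem' := ⟨rfl, zero_mem I⟩
  mul_mem' {x y} hx hy := ⟨by rw [Unitization.fst_mul, hx.1, zero_mul], by
    rw [Unitization.snd_mul, hx.1, hy.1, zero_smul, zero_smul, zero_add, zero_add]
    exact mul_mem hx.2 hy.2⟩
  smul_mem' c {x} hx := ⟨by rw [Unitization.fst_smul, hx.1, smul_zero],
    by rw [Unitization.snd_smul]; exact SMulMemClass.smul_mem c hx.2⟩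

namespace NonUnitalSubalgebra

variable {I : NonUnitalSubalgebra ℂ A}

theorem mul_mem_toUnitization_left (hl : ∀ a : A, ∀ x ∈ I, a * x ∈ I) :
    ∀ z : Unitization ℂ A, ∀ x ∈ I.toUnitization, z * x ∈ I.toUnitization := by
  intro z x hx
  refine ⟨by rw [Unitization.fst_mul, hx.1, mul_zero], ?_⟩
  rw [Unitization.snd_mul, hx.1, zero_smul, add_zero]
  exact add_mem (SMulMemClass.smul_mem _ hx.2) (hl _ _ hx.2)

theorem mul_mem_toUnitization_right (hr : ∀ a : A, ∀ x ∈ I, x * a ∈ I) :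
    ∀ z : Unitization ℂ A, ∀ x ∈ I.toUnitization, x * z ∈ I.toUnitization := by
  intro z x hx
  refine ⟨by rw [Unitization.fst_mul, hx.1, zero_mul], ?_⟩
  rw [Unitization.snd_mul, hx.1, zero_smul, zero_add]
  exact add_mem (SMulMemClass.smul_mem _ hx.2) (hr _ _ hx.2)

theorem isClosed_toUnitization [TopologicalSpace A] (hI : IsClosed (I : Set A)) :
    IsClosed (I.toUnitization : Set (Unitization ℂ A)) :=
  (isClosed_singleton.preimage continuous_unitization_fst).inter
    (hI.preimage continuous_unitization_snd)

end NonUnitalSubalgebra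

variable [SMulCommClass ℂ A A] [IsScalarTower ℂ A A] [TopologicalSpace A]
  [IsTopologicalAddGroup A] [ContinuousSMul ℂ A] [ContinuousMul A]

def idealBiModUnitizationEquiv (I : NonUnitalSubalgebra ℂ A)
    (hl : ∀ a : A, ∀ x ∈ I, a * x ∈ I) (hr : ∀ a : A, ∀ x ∈ I, x * a ∈ I) :
    BiMod.UnitizationEquiv (idealBiMod A I hl hr)
      (idealBiMod (Unitization ℂ A) I.toUnitization
        (NonUnitalSubalgebra.mul_mem_toUnitization_left hl)
        (NonUnitalSubalgebra.mul_mem_toUnitization_right hr)) where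
  toEquiv :=
    { toFun (x : I) :=
        ⟨(x : A), Unitization.fst_inr ℂ (x : A),
          (Unitization.snd_inr ℂ (x : A)).symm ▸ x.2⟩
      invFun z := ⟨z.1.snd, z.2.2⟩
      map_add' (x y : I) := Subtype.ext (Unitization.inr_add ℂ (x : A) y)
      map_smul' c (x : I) := Subtype.ext (Unitization.inr_smul ℂ c (x : A))
      left_inv (x : I) := Subtype.ext (Unitization.snd_inr ℂ (x : A))
      right_inv z := Subtype.ext (Unitization.ext z.2.1.symm (Unitization.snd_inr ℂ _))
      continuous_toFun :=
        (continuous_unitization_inr.comp continuous_subtype_val).subtype_mk _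
      continuous_invFun :=
        (continuous_unitization_snd.comp continuous_subtype_val).subtype_mk _ }
  map_l z (x : I) := Subtype.ext <| Unitization.ext
    (show (z * (x : A)).fst = 0 by simp)
    (show (z * (x : A)).snd = z.fst • (x : A) + z.snd * x by simp)
  map_r z (x : I) := Subtype.ext <| Unitization.ext
    (show ((x : A) * z).fst = 0 by simp)
    (show ((x : A) * z).snd = z.fst • (x : A) + x * z.snd by simp)

end Ideal

theorem nIdeallyAmenable_of_unitization_general (A : Type) [NonUnitalRing A] [Module ℂ A] [SMulCommClass ℂ A A]
    [IsScalarTower ℂ A A] [UniformSpace A] [IsUniformAddGroup A] [ContinuousSMul ℂ A]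
    [ContinuousMul A] (n : ℕ)
    (h : NIdeallyAmenable (Unitization ℂ A) n) : NIdeallyAmenable A n := by
  intro I hI hl hr D hD
  let c := (idealBiModUnitizationEquiv I hl hr).iterDual n
  exact c.isInnerDerivation_of_extendDerivation <|
    h _ (NonUnitalSubalgebra.isClosed_toUnitization hI) _ _ _
      (c.isContDerivation_extendDerivation hD)

/-- If the unitization `A#` of a non-unital Fréchet algebra `A` is `n`-ideally
amenable, then `A` is `n`-ideally amenable. -/
theorem nIdeallyAmenable_of_unitization (A : Type) [NonUnitalRing A] [Module ℂ A] [SMulCommClass ℂ A A]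
    [IsScalarTower ℂ A A] [UniformSpace A] [IsUniformAddGroup A] [ContinuousSMul ℂ A]
    [ContinuousMul A] [CompleteSpace A] [T2Space A] (hA : FrechetSeminorms A)
    (hnu : ¬ HasIdentity A) (n : ℕ)
    (h : NIdeallyAmenable (Unitization ℂ A) n) : NIdeallyAmenable A n :=
  nIdeallyAmenable_of_unitization_general A n h
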